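/- Let $D \ge 2$ and $\sigma_b^2, \sigma_e^2 > 0$. Define the $(2D-1) \times (2D-1)$ block matrices $M_1 = \begin{pmatrix} A & B^T & B^T \\ B & C & E \\ B & E & C \end{pmatrix}$ and $M_2 = \begin{pmatrix} F & G^T & G^T \\ G & H & 0 \\ G & 0 & H \end{pmatrix}$, where $A = \frac{D}{\sigma_e^2 + D\sigma_b^2}$, $B$ is the $(D-1)$-vector with all entries $\frac{1}{\sigma_e^2 + D\sigma_b^2}$, $C$ is the $(D-1)\times(D-1)$ matrix with entries $C_{pq} = \frac{(\sigma_e^2 + D\sigma_b^2)\delta_{pq} - \sigma_b^2}{\sigma_e^2(\sigma_e^2 + D\sigma_b^2)}$, $E$ is the $(D-1)\times(D-1)$ matrix with all entries $\frac{1}{D(\sigma_e^2 + D\sigma_b^2)}$, $F = \sigma_b^2 + \frac{2D-1}{D}\sigma_e^2$, $G$ is the $(D-1)$-vector with all entries $-\sigma_e^2$, and $H$ is the $(D-1)\times(D-1)$ matrix with entries $H_{pq} = \sigma_e^2(1+\delta_{pq})$. Then $M_1 M_2 = I_{2D-1}$. -/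

import Mathlib

/-!
Both factors are bordered block matrices whose inner blocks are of the form `α I + β J`
(`J` the all-ones matrix). Such matrices are closed under multiplication, with
`(α I + β J)(γ I + ε J) = αγ I + (αε + βγ + mβε) J` for `m × m` blocks, so every block of
`M₁ M₂` is again of this form and the identity reduces to a handful of scalar equations in
`D`, `σ_b²`, `σ_e²`.
-/

open Finset

namespace Matrix

variable {ι R : Type*} [DecidableEq ι]

section CommSemiring

variable [CommSemiring R]

/-- The matrix `α I + β J`, where `J` is the all-ones matrix. -/
def scalarAddConst (α β : R) : Matrix ι ι R :=
  of fun p q => α * (if p = q then 1 else 0) + β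

@[simp]
theorem scalarAddConst_apply (α β : R) (p q : ι) :
    scalarAddConst α β p q = α * (if p = q then 1 else 0) + β :=
  rfl

variable [Fintype ι]

theorem sum_scalarAddConst_apply_right (α β : R) (p : ι) :
    ∑ q, scalarAddConst α β p q = α + Fintype.card ι * β := by
  simp [sum_add_distrib]

theorem sum_scalarAddConst_apply_left (α β : R) (q : ι) :
    ∑ p, scalarAddConst α β p q = α + Fintype.card ι * β := by
  simp [sum_add_distrib]

theorem scalarAddConst_mul_scalarAddConst (α β γ ε : R) :
    scalarAddConst (ι := ι) α β * scalarAddConst γ ε =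
      scalarAddConst (α * γ) (α * ε + β * γ + Fintype.card ι * β * ε) := by
  ext p q
  simp only [mul_apply, scalarAddConst_apply, add_mul, mul_add, sum_add_distrib, mul_ite, mul_one, mul_zero, ite_mul, zero_mul, sum_ite_eq, sum_ite_eq', mem_univ,
    if_true, sum_const, card_univ, nsmul_eq_mul]
  ring

end CommSemiring

/-- The bordered block matrix `[[a, b 𝟙ᵀ, b 𝟙ᵀ], [b 𝟙, C, e J], [b 𝟙, e J, C]]`. -/
def borderedTwinBlock (a b e : R) (C : Matrix ι ι R) :
    Matrix (Fin 1 ⊕ (ι ⊕ ι)) (Fin 1 ⊕ (ι ⊕ ι)) R :=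
  of fun i j =>
    match i, j with
    | .inl _, .inl _ => a
    | .inl _, .inr _ => b
    | .inr _, .inl _ => b
    | .inr (.inl p), .inr (.inl q) => C p q
    | .inr (.inl _), .inr (.inr _) => e
    | .inr (.inr _), .inr (.inl _) => e
    | .inr (.inr p), .inr (.inr q) => C p q

theorem borderedTwinBlock_mul_borderedTwinBlock_zero_eq_one [Fintype ι] [CommRing R]
    (a b e f g : R) (C H : Matrix ι ι R)
    (h_corner : a * f + 2 * Fintype.card ι * b * g = 1)
    (h_top : ∀ q, a * g + b * ∑ r, H r q = 0)
    (h_left : ∀ p, b * f + g * ∑ r, C p r + Fintype.card ι * e * g = 0)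
    (h_diag : ∀ p q, b * g + (C * H) p q = (1 : Matrix ι ι R) p q)
    (h_offdiag : ∀ q, b * g + e * ∑ r, H r q = 0) :
    borderedTwinBlock a b e C * borderedTwinBlock f g 0 H = 1 := by
  ext i j
  rcases i with _ | p | p <;> rcases j with _ | q | q <;>
    simp only [borderedTwinBlock, of_apply, mul_apply, one_apply, Fintype.sum_sum_type, sum_const,
      card_univ, Fintype.card_sum, Fintype.card_fin, nsmul_eq_mul, Nat.cast_add, Nat.cast_one,
      one_mul, mul_zero, add_zero, zero_add, ← mul_sum, ← sum_mul, Sum.inl.injEq, Sum.inr.injEq,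
      reduceCtorEq, eq_iff_true_of_subsingleton, if_true, if_false] at h_diag ⊢
  · linear_combination h_corner
  · linear_combination h_top q
  · linear_combination h_top q
  · linear_combination h_left p
  · linear_combination h_diag p q
  · linear_combination h_offdiag q
  · linear_combination h_left p
  · linear_combination h_offdiag q
  · linear_combination h_diag p q

end Matrix

open Matrix

/-- The block matrix `M₁` (the per-patient information matrix summed over a balanced
complete-block design) times the proposed covariance block matrix `M₂` is the identity. -/
theorem block_inverse_identity (D : ℕ) (hD : 2 ≤ D) (sb2 se2 : ℝ)
    (hsb : 0 < sb2) (hse : 0 < se2) :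
    let A : ℝ := (D : ℝ) / (se2 + (D : ℝ) * sb2)
    let Bval : ℝ := 1 / (se2 + (D : ℝ) * sb2)
    let Cent : Fin (D - 1) → Fin (D - 1) → ℝ := fun p q =>
      ((se2 + (D : ℝ) * sb2) * (if p = q then 1 else 0) - sb2) /
        (se2 * (se2 + (D : ℝ) * sb2))
    let Eval : ℝ := 1 / ((D : ℝ) * (se2 + (D : ℝ) * sb2))
    let F : ℝ := sb2 + (2 * (D : ℝ) - 1) / (D : ℝ) * se2
    let Gval : ℝ := -se2
    let Hent : Fin (D - 1) → Fin (D - 1) → ℝ := fun p q =>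
      se2 * (1 + (if p = q then 1 else 0))
    let M1 : Matrix (Fin 1 ⊕ (Fin (D - 1) ⊕ Fin (D - 1)))
        (Fin 1 ⊕ (Fin (D - 1) ⊕ Fin (D - 1))) ℝ :=
      Matrix.of fun i j =>
        match i, j with
        | Sum.inl _, Sum.inl _ => A
        | Sum.inl _, Sum.inr _ => Bval
        | Sum.inr _, Sum.inl _ => Bval
        | Sum.inr (Sum.inl p), Sum.inr (Sum.inl q) => Cent p q
        | Sum.inr (Sum.inl _), Sum.inr (Sum.inr _) => Eval
        | Sum.inr (Sum.inr _), Sum.inr (Sum.inl _) => Eval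
        | Sum.inr (Sum.inr p), Sum.inr (Sum.inr q) => Cent p q
    let M2 : Matrix (Fin 1 ⊕ (Fin (D - 1) ⊕ Fin (D - 1)))
        (Fin 1 ⊕ (Fin (D - 1) ⊕ Fin (D - 1))) ℝ :=
      Matrix.of fun i j =>
        match i, j with
        | Sum.inl _, Sum.inl _ => F
        | Sum.inl _, Sum.inr _ => Gval
        | Sum.inr _, Sum.inl _ => Gval
        | Sum.inr (Sum.inl p), Sum.inr (Sum.inl q) => Hent p q
        | Sum.inr (Sum.inl _), Sum.inr (Sum.inr _) => 0
        | Sum.inr (Sum.inr _), Sum.inr (Sum.inl _) => 0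
        | Sum.inr (Sum.inr p), Sum.inr (Sum.inr q) => Hent p q
    M1 * M2 = 1 := by
  intro A Bval Cent Eval F Gval Hent M1 M2
  have hs : se2 + (D : ℝ) * sb2 ≠ 0 := by positivity
  have hD0 : (D : ℝ) ≠ 0 := Nat.cast_ne_zero.mpr (by omega)
  have hcard : (Fintype.card (Fin (D - 1)) : ℝ) = D - 1 := by
    rw [Fintype.card_fin, Nat.cast_sub (by omega), Nat.cast_one]
  have hC : Cent = scalarAddConst se2⁻¹ (-(sb2 / (se2 * (se2 + D * sb2)))) := by
    ext p q
    simp only [Cent, scalarAddConst_apply]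
    field_simp
    ring
  have hH : Hent = scalarAddConst se2 se2 := by
    ext p q
    simp only [Hent, scalarAddConst_apply]
    ring
  have hM1 : M1 = borderedTwinBlock A Bval Eval Cent := by ext (_ | _ | _) (_ | _ | _) <;> rfl
  have hM2 : M2 = borderedTwinBlock F Gval 0 Hent := by ext (_ | _ | _) (_ | _ | _) <;> rfl
  rw [hM1, hM2, hC, hH]
  apply borderedTwinBlock_mul_borderedTwinBlock_zero_eq_one
  case h_corner =>
    simp only [A, F, Bval, Gval, hcard]
    field_simp
    ring
  case h_top =>
    intro q
    simp only [sum_scalarAddConst_apply_left, hcard, A, Bval, Gval]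
    field_simp
    ring
  case h_left =>
    intro p
    simp only [sum_scalarAddConst_apply_right, hcard, Bval, F, Gval, Eval]
    field_simp
    ring
  case h_diag =>
    intro p q
    rw [scalarAddConst_mul_scalarAddConst, scalarAddConst_apply, one_apply, hcard]
    simp only [Bval, Gval]
    split_ifs <;> field_simp <;> ring
  case h_offdiag =>
    intro q
    simp only [sum_scalarAddConst_apply_left, hcard, Bval, Gval, Eval]
    field_simp
    ring
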